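/- Let G be a (P_6, bull)-free quasi-prime graph containing an induced gem {v_1,...,v_5} (edges v_1v_2, v_2v_3, v_3v_4, v_5v_i for i=1..4) and a nonempty set X of vertices complete to {v_1,v_4} and anticomplete to {v_2,v_3,v_5}, a set W of vertices anticomplete to {v_1,v_2,v_3,v_4} each having a neighbor in V_5 (vertices with the same neighborhood on {v_1,...,v_4} as v_5 and adjacency to {v_1,v_2,v_3,v_4}), and Z_1 the union of components of Z (vertices anticomplete to {v_1,...,v_4} ∪ V_5) having a neighbor in W. If Z_1 is nonempty, then there exists a vertex w* in W such that Z_1 ∩ N(w*) is complete to Z_1 \ N(w*). -/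
import Mathlib


/-- The bull: vertices `a,b,c,d,e = 0,1,2,3,4` with edges `ab, bc, cd, be, ce`. -/
def bull : SimpleGraph (Fin 5) :=
  SimpleGraph.fromRel (fun a b => (a, b) ∈
    ([(0,1),(1,2),(2,3),(1,4),(2,4)] : List (Fin 5 × Fin 5)))

/-- The gem: a path `v₁v₂v₃v₄ = 0,1,2,3` plus a dominating vertex `v₅ = 4`. -/
def gem : SimpleGraph (Fin 5) :=
  SimpleGraph.fromRel (fun a b => (a, b) ∈
    ([(0,1),(1,2),(2,3),(4,0),(4,1),(4,2),(4,3)] : List (Fin 5 × Fin 5)))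

/-- `G` contains no induced subgraph isomorphic to `F`. -/
def InducedFree {α β : Type*} (F : SimpleGraph α) (G : SimpleGraph β) : Prop :=
  ¬ ∃ f : α ↪ β, ∀ a b : α, G.Adj (f a) (f b) ↔ F.Adj a b

/-- A homogeneous set: every vertex outside `S` is complete or anticomplete to `S`. -/
def IsHomog {V : Type*} (G : SimpleGraph V) (S : Set V) : Prop :=
  ∀ v ∉ S, (∀ s ∈ S, G.Adj v s) ∨ (∀ s ∈ S, ¬ G.Adj v s)

/-- A graph is quasi-prime if every proper homogeneous set is a clique. -/
def QuasiPrime {V : Type*} (G : SimpleGraph V) : Prop :=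
  ∀ S : Set V, IsHomog G S → 2 ≤ S.ncard → S ≠ Set.univ → G.IsClique S

/-- `V₅`: vertices with the same neighborhood as `v₅ = f 4` on `{v₁,…,v₄}`, i.e.
adjacent to `v₁, v₂, v₃, v₄` (adjacency to `v₅` itself unconstrained). -/
def V5set {V : Type*} (G : SimpleGraph V) (f : Fin 5 ↪ V) : Set V :=
  { x | ∀ j : Fin 5, j ≠ 4 → (G.Adj x (f j) ↔ gem.Adj 4 j) }

/-- `X`: vertices complete to `{v₁, v₄}` and anticomplete to `{v₂, v₃, v₅}`. -/
def Xset {V : Type*} (G : SimpleGraph V) (f : Fin 5 ↪ V) : Set V :=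
  { x | G.Adj x (f 0) ∧ G.Adj x (f 3) ∧
        ¬ G.Adj x (f 1) ∧ ¬ G.Adj x (f 2) ∧ ¬ G.Adj x (f 4) }

/-- `W`: vertices anticomplete to `{v₁, v₂, v₃, v₄}` with a neighbor in `V₅`. -/
def Wset {V : Type*} (G : SimpleGraph V) (f : Fin 5 ↪ V) : Set V :=
  { x | (∀ j : Fin 5, j ≠ 4 → ¬ G.Adj x (f j)) ∧ ∃ v ∈ V5set G f, G.Adj x v }

/-- `Z`: vertices anticomplete to `{v₁, v₂, v₃, v₄} ∪ V₅`. -/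
def Zset {V : Type*} (G : SimpleGraph V) (f : Fin 5 ↪ V) : Set V :=
  { x | (∀ j : Fin 5, j ≠ 4 → ¬ G.Adj x (f j)) ∧ ∀ v ∈ V5set G f, ¬ G.Adj x v }

/-- `Z₁`: the union of the components of `G[Z]` containing a vertex with a neighbor
in `W`. -/
def Z1set {V : Type*} (G : SimpleGraph V) (f : Fin 5 ↪ V) : Set V :=
  { z | ∃ hz : z ∈ Zset G f, ∃ z', ∃ hz' : z' ∈ Zset G f,
      (∃ w ∈ Wset G f, G.Adj z' w) ∧
      (G.induce (Zset G f)).Reachable ⟨z, hz⟩ ⟨z', hz'⟩ }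


instance : DecidableRel bull.Adj := fun a b =>
  decidable_of_iff _ (by unfold bull; exact (SimpleGraph.fromRel_adj _ a b).symm)

instance : DecidableRel gem.Adj := fun a b =>
  decidable_of_iff _ (by unfold gem; exact (SimpleGraph.fromRel_adj _ a b).symm)

lemma has_bull {V : Type*} (G : SimpleGraph V) (p : Fin 5 → V)
    (e01 : G.Adj (p 0) (p 1)) (e12 : G.Adj (p 1) (p 2)) (e23 : G.Adj (p 2) (p 3))
    (e14 : G.Adj (p 1) (p 4)) (e24 : G.Adj (p 2) (p 4))
    (n02 : ¬ G.Adj (p 0) (p 2)) (n03 : ¬ G.Adj (p 0) (p 3)) (n04 : ¬ G.Adj (p 0) (p 4))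
    (n13 : ¬ G.Adj (p 1) (p 3)) (n34 : ¬ G.Adj (p 3) (p 4))
    (d02 : p 0 ≠ p 2) (d03 : p 0 ≠ p 3) (d04 : p 0 ≠ p 4)
    (d13 : p 1 ≠ p 3) (d34 : p 3 ≠ p 4) :
    ∃ f : Fin 5 ↪ V, ∀ a b, G.Adj (f a) (f b) ↔ bull.Adj a b := by
  have d01 := e01.ne
  have d12 := e12.ne
  have d23 := e23.ne
  have d14 := e14.ne
  have d24 := e24.ne
  have inj : Function.Injective p := by
    intro i j h
    fin_cases i <;> fin_cases j <;>
      first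
        | rfl
        | (exfalso; simp_all [eq_comm])
  refine ⟨⟨p, inj⟩, ?_⟩
  have e10 := e01.symm
  have e21 := e12.symm
  have e32 := e23.symm
  have e41 := e14.symm
  have e42 := e24.symm
  have n20 : ¬ G.Adj (p 2) (p 0) := fun h => n02 h.symm
  have n30 : ¬ G.Adj (p 3) (p 0) := fun h => n03 h.symm
  have n40 : ¬ G.Adj (p 4) (p 0) := fun h => n04 h.symm
  have n31 : ¬ G.Adj (p 3) (p 1) := fun h => n13 h.symm
  have n43 : ¬ G.Adj (p 4) (p 3) := fun h => n34 h.symm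
  have n00 : ¬ G.Adj (p 0) (p 0) := G.irrefl
  have n11 : ¬ G.Adj (p 1) (p 1) := G.irrefl
  have n22 : ¬ G.Adj (p 2) (p 2) := G.irrefl
  have n33 : ¬ G.Adj (p 3) (p 3) := G.irrefl
  have n44 : ¬ G.Adj (p 4) (p 4) := G.irrefl
  intro a b
  simp only [Function.Embedding.coeFn_mk]
  fin_cases a <;> fin_cases b <;>
    simp only [Fin.zero_eta, Fin.mk_one, Fin.isValue,
      show (⟨2,by norm_num⟩ : Fin 5) = 2 from rfl,
      show (⟨3,by norm_num⟩ : Fin 5) = 3 from rfl,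
      show (⟨4,by norm_num⟩ : Fin 5) = 4 from rfl] <;>
    first
      | exact iff_of_true (by assumption) (by decide)
      | exact iff_of_false (by assumption) (by decide)

/-- Item (k) of Theorem 4.1: in a `(P₆, bull)`-free quasi-prime graph containing an
induced gem with `X ≠ ∅` (using also that `X` is complete to `W` and to `Z₁`), if
`Z₁ ≠ ∅` then some `w* ∈ W` is such that `Z₁ ∩ N(w*)` is complete to
`Z₁ \ N(w*)`. -/
theorem Z1_structure {V : Type*} [Fintype V] (G : SimpleGraph V)
    (hP6 : InducedFree (SimpleGraph.pathGraph 6) G) (hbull : InducedFree bull G)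
    (hqp : QuasiPrime G)
    (f : Fin 5 ↪ V) (hgem : ∀ a b : Fin 5, G.Adj (f a) (f b) ↔ gem.Adj a b)
    (hXne : (Xset G f).Nonempty)
    (hXW : ∀ x ∈ Xset G f, ∀ w ∈ Wset G f, G.Adj x w)
    (hXZ1 : ∀ x ∈ Xset G f, ∀ z ∈ Z1set G f, G.Adj x z)
    (hZ1ne : (Z1set G f).Nonempty) :
    ∃ w ∈ Wset G f, ∀ a ∈ Z1set G f, G.Adj w a →
      ∀ b ∈ Z1set G f, ¬ G.Adj w b → G.Adj a b := by
  classical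
  obtain ⟨x, hxX⟩ := hXne
  obtain ⟨hx0, hx3, hx1n, hx2n, hx4n⟩ := hxX
  obtain ⟨z, hzZ1⟩ := hZ1ne
  obtain ⟨_, z', _, ⟨w, hwW, -⟩, -⟩ := hzZ1
  refine ⟨w, hwW, ?_⟩
  obtain ⟨hw1, v, hvV5, hwv⟩ := hwW
  have hxX' : x ∈ Xset G f := ⟨hx0, hx3, hx1n, hx2n, hx4n⟩
  have hwW' : w ∈ Wset G f := ⟨hw1, v, hvV5, hwv⟩
  have hxw : G.Adj x w := hXW x hxX' w hwW'
  have hv0 : G.Adj v (f 0) := (hvV5 0 (by decide)).mpr (by decide)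
  have hv1 : G.Adj v (f 1) := (hvV5 1 (by decide)).mpr (by decide)
  have hf10 : G.Adj (f 1) (f 0) := (hgem 1 0).mpr (by decide)
  have hf13 : ¬ G.Adj (f 1) (f 3) := fun h => (by decide : ¬ gem.Adj 1 3) ((hgem 1 3).mp h)
  intro a haZ1 hwa b hbZ1 hwb
  have hxa : G.Adj x a := hXZ1 x hxX' a haZ1
  have hxb : G.Adj x b := hXZ1 x hxX' b hbZ1
  obtain ⟨haZ, -⟩ := haZ1
  obtain ⟨hbZ, -⟩ := hbZ1
  have ha0 : ¬ G.Adj a (f 0) := haZ.1 0 (by decide)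
  have hb0 : ¬ G.Adj b (f 0) := hbZ.1 0 (by decide)
  have hb1 : ¬ G.Adj b (f 1) := hbZ.1 1 (by decide)
  have hw0 : ¬ G.Adj w (f 0) := hw1 0 (by decide)
  have hw1' : ¬ G.Adj w (f 1) := hw1 1 (by decide)
  have hav : ¬ G.Adj a v := haZ.2 v hvV5
  have hbv : ¬ G.Adj b v := hbZ.2 v hvV5
  by_contra hab
  by_cases hvx : G.Adj v x
  · -- bull on (f 1, v, x, b, w): triangle {v, x, w}, pendants f 1 at v, b at x
    have E01 : G.Adj (f 1) v := hv1.symm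
    have E12 : G.Adj v x := hvx
    have E23 : G.Adj x b := hxb
    have E14 : G.Adj v w := hwv.symm
    have E24 : G.Adj x w := hxw
    have N02 : ¬ G.Adj (f 1) x := fun h => hx1n h.symm
    have N03 : ¬ G.Adj (f 1) b := fun h => hb1 h.symm
    have N04 : ¬ G.Adj (f 1) w := fun h => hw1' h.symm
    have N13 : ¬ G.Adj v b := fun h => hbv h.symm
    have N34 : ¬ G.Adj b w := fun h => hwb h.symm
    have D02 : f 1 ≠ x := fun h => hf13 (by rw [h]; exact hx3)
    have D03 : f 1 ≠ b := fun h => hb0 (by rw [← h]; exact hf10)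
    have D04 : f 1 ≠ w := fun h => hw0 (by rw [← h]; exact hf10)
    have D13 : v ≠ b := fun h => hb0 (by rw [← h]; exact hv0)
    have D34 : b ≠ w := fun h => hbv (by rw [h]; exact hwv)
    exact hbull (has_bull G ![f 1, v, x, b, w]
      E01 E12 E23 E14 E24 N02 N03 N04 N13 N34 D02 D03 D04 D13 D34)
  · -- bull on (v, w, x, b, a): triangle {w, x, a}, pendants v at w, b at x
    have E01 : G.Adj v w := hwv.symm
    have E12 : G.Adj w x := hxw.symm
    have E23 : G.Adj x b := hxb
    have E14 : G.Adj w a := hwa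
    have E24 : G.Adj x a := hxa
    have N02 : ¬ G.Adj v x := hvx
    have N03 : ¬ G.Adj v b := fun h => hbv h.symm
    have N04 : ¬ G.Adj v a := fun h => hav h.symm
    have N13 : ¬ G.Adj w b := hwb
    have N34 : ¬ G.Adj b a := fun h => hab h.symm
    have D02 : v ≠ x := fun h => hx1n (by rw [← h]; exact hv1)
    have D03 : v ≠ b := fun h => hb0 (by rw [← h]; exact hv0)
    have D04 : v ≠ a := fun h => ha0 (by rw [← h]; exact hv0)
    have D13 : w ≠ b := fun h => hbv (by rw [← h]; exact hwv)
    have D34 : b ≠ a := fun h => hwb (by rw [h]; exact hwa)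
    exact hbull (has_bull G ![v, w, x, b, a]
      E01 E12 E23 E14 E24 N02 N03 N04 N13 N34 D02 D03 D04 D13 D34)
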